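/- Let (d_i)_{i≥1} be a bounded sequence of strictly positive real numbers such that limsup_{n→∞} (1/n)·(d_1 + ⋯ + d_{n(n+1)/2}) > 0, and let D = diag(d). Then D cannot be obtained via the Anderson model: there do not exist a compact operator C and a bounded operator Z on H, at least one of which is block tridiagonal with central block sizes k_n = n (so the n-th block consists of the indices i with n(n−1)/2 < i ≤ n(n+1)/2), such that D = C∘Z − Z∘C. -/

import Mathlib

/-!
Take the trace of `D = C Z - Z C` over the first `n` blocks, i.e. over the first `n(n+1)/2`
basis vectors. Expanding `(C Z)_{jj} = ∑ i, C_{ji} Z_{ij}`, the terms with both indices in these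
blocks cancel against those of `Z C`, and block tridiagonality kills every other term except
those pairing block `n` with block `n + 1`. By Bessel and Cauchy–Schwarz that remainder is at
most `2 (n + 1) ‖Z‖ ε`, where `ε` bounds `‖C e_i‖` on blocks `n` and `n + 1`. As `C` is compact,
`C e_i → 0`, so the partial sums `d_1 + ⋯ + d_{n(n+1)/2}` are `o(n)`, contradicting the `limsup`.
-/

open Filter

variable {H : Type*} [NormedAddCommGroup H] [InnerProductSpace ℂ H] [CompleteSpace H]

/-- Partial sums `s n = k 1 + ⋯ + k n` of a sequence of block sizes (with `s 0 = 0`). -/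
def psum (k : ℕ → ℕ) (n : ℕ) : ℕ := ∑ j ∈ Finset.Icc 1 n, k j

/-- The block index `b i` of an index `i ≥ 1`: the unique `n` with `s (n-1) < i ≤ s n`
(realized as the least `n` with `i ≤ s n`). -/
noncomputable def blockIdx (k : ℕ → ℕ) (i : ℕ) : ℕ := sInf {n | i ≤ psum k n}

/-- A bounded operator `W` is block tridiagonal with central block sizes `k n` if
`⟪e i, W (e j)⟫ = 0` whenever `|b i - b j| ≥ 2`. -/
def IsBlockTridiagonal (e : HilbertBasis ℕ+ ℂ H) (k : ℕ → ℕ) (W : H →L[ℂ] H) : Prop :=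
  ∀ i j : ℕ+, 2 ≤ |(blockIdx k (i : ℕ) : ℤ) - (blockIdx k (j : ℕ) : ℤ)| →
    (inner ℂ (e i) (W (e j)) : ℂ) = 0

/-- The orthogonal projection `P n` onto `span {e i : s (n-1) < i ≤ s n}`. -/
noncomputable def blockProj (e : HilbertBasis ℕ+ ℂ H) (k : ℕ → ℕ) (n : ℕ) : H →L[ℂ] H :=
  ∑ i ∈ (Finset.Ioc (psum k (n - 1)) (psum k n)).attach,
    (innerSL ℂ (e ⟨i.1, Nat.lt_of_le_of_lt (Nat.zero_le _) (Finset.mem_Ioc.mp i.2).1⟩)).smulRight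
      (e ⟨i.1, Nat.lt_of_le_of_lt (Nat.zero_le _) (Finset.mem_Ioc.mp i.2).1⟩)

/-- The partial trace `∑_{j=1}^m ⟪e j, T (e j)⟫`. -/
noncomputable def ptrace (e : HilbertBasis ℕ+ ℂ H) (T : H →L[ℂ] H) (m : ℕ) : ℂ :=
  ∑ i ∈ (Finset.Icc 1 m).attach,
    (inner ℂ (e ⟨i.1, (Finset.mem_Icc.mp i.2).1⟩) (T (e ⟨i.1, (Finset.mem_Icc.mp i.2).1⟩)) : ℂ)

/-- The upper off-diagonal block `A n (W) = P n ∘ W ∘ P (n+1)`. -/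
noncomputable def blockA (e : HilbertBasis ℕ+ ℂ H) (k : ℕ → ℕ) (n : ℕ) (W : H →L[ℂ] H) :
    H →L[ℂ] H :=
  blockProj e k n ∘L W ∘L blockProj e k (n + 1)

/-- The lower off-diagonal block `B n (W) = P (n+1) ∘ W ∘ P n`. -/
noncomputable def blockB (e : HilbertBasis ℕ+ ℂ H) (k : ℕ → ℕ) (n : ℕ) (W : H →L[ℂ] H) :
    H →L[ℂ] H :=
  blockProj e k (n + 1) ∘L W ∘L blockProj e k n

open scoped InnerProductSpace

section

variable {ι 𝕜 E F : Type*} [RCLike 𝕜] [NormedAddCommGroup E] [InnerProductSpace 𝕜 E]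
  [NormedAddCommGroup F] [InnerProductSpace 𝕜 F]

lemma HilbertBasis.tendsto_inner_cofinite (b : HilbertBasis ι 𝕜 E) (x : E) :
    Tendsto (fun i => ⟪b i, x⟫_𝕜) cofinite (nhds 0) := by
  have := (b.hasSum_repr x).summable.tendsto_cofinite_zero
  rw [tendsto_zero_iff_norm_tendsto_zero] at this ⊢
  simpa [norm_smul, b.orthonormal.1, HilbertBasis.repr_apply_apply] using this

/-- Every cluster point `y` of `T (b i)` satisfies `⟪y, y⟫ = lim ⟪T (b i), y⟫ = 0`, since
`⟪T (b i), y⟫ = ⟪b i, T† y⟫`. -/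
lemma HilbertBasis.tendsto_cofinite_of_isCompactOperator [CompleteSpace E] [CompleteSpace F]
    (b : HilbertBasis ι 𝕜 E) {T : E →L[𝕜] F} (hT : IsCompactOperator T) :
    Tendsto (fun i => T (b i)) cofinite (nhds 0) := by
  refine (hT.isCompact_closure_image_closedBall 1).tendsto_nhds_of_unique_mapClusterPt
    (Eventually.of_forall fun i => subset_closure ⟨b i, by simp [b.orthonormal.1 i], rfl⟩)
    fun y _ hy => ?_
  have hinner : Tendsto (fun i => ⟪T (b i), y⟫_𝕜) cofinite (nhds 0) := by
    simpa [ContinuousLinearMap.adjoint_inner_right] using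
      b.tendsto_inner_cofinite (ContinuousLinearMap.adjoint T y)
  have hy' : MapClusterPt ⟪y, y⟫_𝕜 cofinite (fun i => ⟪T (b i), y⟫_𝕜) :=
    hy.continuousAt_comp (f := fun x => ⟪x, y⟫_𝕜) (by fun_prop)
  have : ⟪y, y⟫_𝕜 = 0 := eq_of_nhds_neBot (ClusterPt.mono hy' hinner)
  simpa using this

lemma HilbertBasis.hasSum_inner_apply_mul_inner [CompleteSpace E] [CompleteSpace F]
    (b : HilbertBasis ι 𝕜 E) (T : E →L[𝕜] F) (x : F) (y : E) :
    HasSum (fun i => ⟪x, T (b i)⟫_𝕜 * ⟪b i, y⟫_𝕜) ⟪x, T y⟫_𝕜 := by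
  simpa [ContinuousLinearMap.adjoint_inner_left] using
    b.hasSum_inner_mul_inner (ContinuousLinearMap.adjoint T x) y

def prodEntry (e : ι → E) (C Z : E →L[𝕜] E) (j i : ι) : 𝕜 :=
  ⟪e j, C (e i)⟫_𝕜 * ⟪e i, Z (e j)⟫_𝕜

lemma HilbertBasis.hasSum_inner_commutator [CompleteSpace E] (b : HilbertBasis ι 𝕜 E)
    (C Z : E →L[𝕜] E) (j : ι) :
    HasSum (fun i => prodEntry b C Z j i - prodEntry b C Z i j)
      ⟪b j, (C ∘L Z - Z ∘L C) (b j)⟫_𝕜 := by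
  have h := (b.hasSum_inner_apply_mul_inner C (b j) (Z (b j))).sub
    (b.hasSum_inner_apply_mul_inner Z (b j) (C (b j)))
  simp only [prodEntry, FunLike.coe_sub, Pi.sub_apply, ContinuousLinearMap.coe_comp,
    Function.comp_apply, inner_sub_right]
  simpa only [mul_comm ⟪b j, Z _⟫_𝕜] using h

lemma Orthonormal.norm_sum_sum_inner_mul_inner_le {e : ι → E} (he : Orthonormal 𝕜 e)
    (s t : Finset ι) (u v : ι → E) :
    ‖∑ j ∈ s, ∑ i ∈ t, ⟪e j, u i⟫_𝕜 * ⟪e i, v j⟫_𝕜‖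
      ≤ √((∑ i ∈ t, ‖u i‖ ^ 2) * ∑ j ∈ s, ‖v j‖ ^ 2) := by
  have bessel_u : ∑ p ∈ s ×ˢ t, ‖⟪e p.1, u p.2⟫_𝕜‖ ^ 2 ≤ ∑ i ∈ t, ‖u i‖ ^ 2 := by
    rw [Finset.sum_product_right' (f := fun j i => ‖⟪e j, u i⟫_𝕜‖ ^ 2)]
    exact Finset.sum_le_sum fun i _ => he.sum_inner_products_le (u i)
  have bessel_v : ∑ p ∈ s ×ˢ t, ‖⟪e p.2, v p.1⟫_𝕜‖ ^ 2 ≤ ∑ j ∈ s, ‖v j‖ ^ 2 := by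
    rw [Finset.sum_product' (f := fun j i => ‖⟪e i, v j⟫_𝕜‖ ^ 2)]
    exact Finset.sum_le_sum fun j _ => he.sum_inner_products_le (v j)
  calc ‖∑ j ∈ s, ∑ i ∈ t, ⟪e j, u i⟫_𝕜 * ⟪e i, v j⟫_𝕜‖
      ≤ ∑ p ∈ s ×ˢ t, ‖⟪e p.1, u p.2⟫_𝕜‖ * ‖⟪e p.2, v p.1⟫_𝕜‖ := by
        rw [← Finset.sum_product' (f := fun j i => ⟪e j, u i⟫_𝕜 * ⟪e i, v j⟫_𝕜)]
        exact (norm_sum_le _ _).trans_eq (by simp_rw [norm_mul])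
    _ ≤ √(∑ p ∈ s ×ˢ t, ‖⟪e p.1, u p.2⟫_𝕜‖ ^ 2) * √(∑ p ∈ s ×ˢ t, ‖⟪e p.2, v p.1⟫_𝕜‖ ^ 2) :=
        Real.sum_mul_le_sqrt_mul_sqrt _ _ _
    _ ≤ √(∑ i ∈ t, ‖u i‖ ^ 2) * √(∑ j ∈ s, ‖v j‖ ^ 2) := by gcongr
    _ = √((∑ i ∈ t, ‖u i‖ ^ 2) * ∑ j ∈ s, ‖v j‖ ^ 2) := (Real.sqrt_mul (by positivity) _).symm

lemma Orthonormal.norm_sum_sum_prodEntry_sub_le {e : ι → E} (he : Orthonormal 𝕜 e)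
    (s t : Finset ι) (C Z : E →L[𝕜] E) :
    ‖∑ j ∈ s, ∑ i ∈ t, (prodEntry e C Z j i - prodEntry e C Z i j)‖ ≤
      √((∑ i ∈ t, ‖C (e i)‖ ^ 2) * ∑ j ∈ s, ‖Z (e j)‖ ^ 2) +
        √((∑ j ∈ s, ‖C (e j)‖ ^ 2) * ∑ i ∈ t, ‖Z (e i)‖ ^ 2) := by
  simp only [Finset.sum_sub_distrib]
  refine (norm_sub_le _ _).trans (add_le_add ?_ ?_)
  · exact he.norm_sum_sum_inner_mul_inner_le s t (fun i => C (e i)) (fun j => Z (e j))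
  · rw [Finset.sum_comm]
    exact he.norm_sum_sum_inner_mul_inner_le t s (fun j => C (e j)) (fun i => Z (e i))

lemma Orthonormal.norm_sum_sum_prodEntry_sub_le_of_norm_le {e : ι → E} (he : Orthonormal 𝕜 e)
    {s t : Finset ι} {C : E →L[𝕜] E} (Z : E →L[𝕜] E) {ε : ℝ} (hε : 0 ≤ ε)
    (hCs : ∀ i ∈ s, ‖C (e i)‖ ≤ ε) (hCt : ∀ i ∈ t, ‖C (e i)‖ ≤ ε) :
    ‖∑ j ∈ s, ∑ i ∈ t, (prodEntry e C Z j i - prodEntry e C Z i j)‖ ≤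
      2 * (√(s.card * t.card) * (ε * ‖Z‖)) := by
  have sum_sq_le : ∀ (u : Finset ι) (T : E →L[𝕜] E) (c : ℝ), (∀ i ∈ u, ‖T (e i)‖ ≤ c) →
      ∑ i ∈ u, ‖T (e i)‖ ^ 2 ≤ u.card * c ^ 2 := fun u T c h => by
    simpa using Finset.sum_le_card_nsmul u _ _ fun i hi =>
      pow_le_pow_left₀ (norm_nonneg _) (h i hi) 2
  have hZ : ∀ u : Finset ι, ∑ i ∈ u, ‖Z (e i)‖ ^ 2 ≤ u.card * ‖Z‖ ^ 2 := fun u =>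
    sum_sq_le u Z ‖Z‖ fun i _ => (Z.le_opNorm _).trans_eq (by rw [he.1 i, mul_one])
  have hsqrt : ∀ a b : ℝ, 0 ≤ b → a * b ≤ s.card * t.card * (ε * ‖Z‖) ^ 2 →
      √(a * b) ≤ √(s.card * t.card) * (ε * ‖Z‖) := fun a b hb hab => by
    rw [Real.sqrt_le_left (by positivity), mul_pow, Real.sq_sqrt (by positivity)]
    exact hab
  refine (he.norm_sum_sum_prodEntry_sub_le s t C Z).trans ?_
  rw [two_mul]
  gcongr
  · refine hsqrt _ _ (by positivity) ((mul_le_mul (sum_sq_le t C ε hCt) (hZ s) (by positivity) (by positivity)).trans_eq ?_)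
    ring
  · refine hsqrt _ _ (by positivity) ((mul_le_mul (sum_sq_le s C ε hCs) (hZ t) (by positivity) (by positivity)).trans_eq ?_)
    ring

end

lemma Finset.sum_sum_sub_swap_eq {ι M : Type*} [AddCommGroup M] [DecidableEq ι]
    (a : ι → ι → M) {r s t : Finset ι} (hrs : r ⊆ s) (hst : Disjoint s t)
    (h : ∀ j ∈ s \ r, ∀ i ∈ t, a j i = a i j) :
    ∑ j ∈ s, ∑ i ∈ s ∪ t, (a j i - a i j) = ∑ j ∈ r, ∑ i ∈ t, (a j i - a i j) := by
  have hss : ∑ j ∈ s, ∑ i ∈ s, (a j i - a i j) = 0 := by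
    simp only [Finset.sum_sub_distrib]
    rw [Finset.sum_comm, sub_self]
  simp only [Finset.sum_union hst, Finset.sum_add_distrib, hss, zero_add]
  rw [← Finset.sum_sdiff hrs, Finset.sum_eq_zero fun j hj => Finset.sum_eq_zero fun i hi =>
    sub_eq_zero.mpr (h j hj i hi), zero_add]

lemma psum_mono (k : ℕ → ℕ) : Monotone (psum k) := fun _ _ h =>
  Finset.sum_le_sum_of_subset (Finset.Icc_subset_Icc_right h)

lemma psum_succ (k : ℕ → ℕ) (n : ℕ) : psum k (n + 1) = psum k n + k (n + 1) :=
  Finset.sum_Icc_succ_top (Nat.le_add_left 1 n) k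

lemma two_mul_psum_id (n : ℕ) : 2 * psum (fun n => n) n = n * (n + 1) := by
  induction n with
  | zero => rfl
  | succ n ih => rw [psum_succ, mul_add, ih]; ring

lemma psum_id (n : ℕ) : psum (fun n => n) n = n * (n + 1) / 2 := by
  have := two_mul_psum_id n
  omega

lemma le_psum_id (n : ℕ) : n ≤ psum (fun n => n) n := by
  have := two_mul_psum_id n
  nlinarith

lemma blockIdx_le_of_le_psum {k : ℕ → ℕ} {i m : ℕ} (h : i ≤ psum k m) : blockIdx k i ≤ m :=
  Nat.sInf_le h

lemma le_psum_of_blockIdx_le {k : ℕ → ℕ} {i m : ℕ} (hi : ∃ n, i ≤ psum k n)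
    (h : blockIdx k i ≤ m) : i ≤ psum k m :=
  le_trans (Nat.sInf_mem (s := {n | i ≤ psum k n}) hi) (psum_mono k h)

lemma two_le_abs_blockIdx_sub {k : ℕ → ℕ} {i j m : ℕ} (hi : ∃ n, i ≤ psum k n)
    (hj : j ≤ psum k m) (hij : psum k (m + 1) < i) :
    2 ≤ |(blockIdx k i : ℤ) - blockIdx k j| := by
  have hbj := blockIdx_le_of_le_psum hj
  have hbi : m + 1 < blockIdx k i :=
    lt_of_not_ge fun h => (le_psum_of_blockIdx_le hi h).not_gt hij
  exact le_abs.mpr (Or.inl (by omega))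

def pnatIoc (a b : ℕ) : Finset ℕ+ := (Finset.Ioc a b).subtype (0 < ·)

@[simp] lemma mem_pnatIoc {a b : ℕ} {i : ℕ+} : i ∈ pnatIoc a b ↔ a < i ∧ (i : ℕ) ≤ b :=
  Finset.mem_subtype.trans Finset.mem_Ioc

lemma sum_pnatIoc {M : Type*} [AddCommMonoid M] (a b : ℕ) (f : ℕ → M) :
    ∑ i ∈ pnatIoc a b, f i = ∑ j ∈ Finset.Ioc a b, f j :=
  Finset.sum_subtype_of_mem f fun _ hj => (Nat.zero_le a).trans_lt (Finset.mem_Ioc.mp hj).1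

lemma card_pnatIoc (a b : ℕ) : (pnatIoc a b).card = b - a := by
  rw [Finset.card_eq_sum_ones, sum_pnatIoc a b fun _ => 1]
  simp

lemma card_pnatIoc_psum_succ (k : ℕ → ℕ) (n : ℕ) :
    (pnatIoc (psum k n) (psum k (n + 1))).card = k (n + 1) := by
  rw [card_pnatIoc, psum_succ, add_tsub_cancel_left]

lemma card_pnatIoc_psum_id (n : ℕ) :
    (pnatIoc (psum (fun n => n) (n - 1)) (psum (fun n => n) n)).card = n := by
  rcases n with _ | n
  · exact card_pnatIoc _ _
  · exact card_pnatIoc_psum_succ _ n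

section

variable {E : Type*} [NormedAddCommGroup E] [InnerProductSpace ℂ E]

lemma sum_pnatIoc_inner_apply {e : ℕ+ → E} (he : Orthonormal ℂ e) {D : E →L[ℂ] E} {d : ℕ → ℝ}
    (hD : ∀ i : ℕ+, D (e i) = (d i : ℂ) • e i) (m : ℕ) :
    ∑ j ∈ pnatIoc 0 m, ⟪e j, D (e j)⟫_ℂ = ((∑ j ∈ Finset.Icc 1 m, d j : ℝ) : ℂ) := by
  simp [hD, he.1, sum_pnatIoc 0 m fun j => (d j : ℂ), ← Finset.Icc_add_one_left_eq_Ioc]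

lemma prodEntry_eq_zero_of_isBlockTridiagonal {e : HilbertBasis ℕ+ ℂ E} {k : ℕ → ℕ}
    {C Z : E →L[ℂ] E} (htri : IsBlockTridiagonal e k C ∨ IsBlockTridiagonal e k Z) {i j : ℕ+}
    (h : 2 ≤ |(blockIdx k i : ℤ) - blockIdx k j|) :
    prodEntry e C Z i j = 0 ∧ prodEntry e C Z j i = 0 := by
  have h' : 2 ≤ |(blockIdx k j : ℤ) - blockIdx k i| := by rwa [abs_sub_comm]
  rcases htri with hC | hZ
  · exact ⟨by simp [prodEntry, hC i j h], by simp [prodEntry, hC j i h']⟩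
  · exact ⟨by simp [prodEntry, hZ j i h'], by simp [prodEntry, hZ i j h]⟩

lemma sum_inner_commutator_eq_sum_blocks [CompleteSpace E] (e : HilbertBasis ℕ+ ℂ E)
    {k : ℕ → ℕ} (hk : ∀ i, ∃ n, i ≤ psum k n) {C Z : E →L[ℂ] E}
    (htri : IsBlockTridiagonal e k C ∨ IsBlockTridiagonal e k Z) (n : ℕ) :
    ∑ j ∈ pnatIoc 0 (psum k n), ⟪e j, (C ∘L Z - Z ∘L C) (e j)⟫_ℂ =
      ∑ j ∈ pnatIoc (psum k (n - 1)) (psum k n), ∑ i ∈ pnatIoc (psum k n) (psum k (n + 1)),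
        (prodEntry e C Z j i - prodEntry e C Z i j) := by
  have far : ∀ {m : ℕ} {i j : ℕ+}, (j : ℕ) ≤ psum k m → psum k (m + 1) < i →
      prodEntry e C Z j i - prodEntry e C Z i j = 0 := fun hj hij => by
    obtain ⟨h1, h2⟩ := prodEntry_eq_zero_of_isBlockTridiagonal htri
      (two_le_abs_blockIdx_sub (hk _) hj hij)
    rw [h1, h2, sub_zero]
  rcases n with _ | n
  · have h0 : pnatIoc 0 0 = ∅ := Finset.card_eq_zero.mp (card_pnatIoc 0 0)
    simp [psum, h0]
  calc _ = ∑ j ∈ pnatIoc 0 (psum k (n + 1)),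
        ∑ i ∈ pnatIoc 0 (psum k (n + 1)) ∪ pnatIoc (psum k (n + 1)) (psum k (n + 1 + 1)),
          (prodEntry e C Z j i - prodEntry e C Z i j) := by
        refine Finset.sum_congr rfl fun j hj =>
          (e.hasSum_inner_commutator C Z j).unique (hasSum_sum_of_ne_finset_zero fun i hi => ?_)
        simp only [Finset.mem_union, mem_pnatIoc, not_or, not_and, not_le] at hj hi
        exact far hj.2 (hi.2 (hi.1 i.pos))
    _ = _ := by
        refine Finset.sum_sum_sub_swap_eq _ (fun j hj => by simp only [mem_pnatIoc] at hj ⊢; omega)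
          (Finset.disjoint_left.mpr fun i => by simp only [mem_pnatIoc]; omega) fun j hj i hi => ?_
        simp only [Finset.mem_sdiff, mem_pnatIoc, add_tsub_cancel_right] at hj hi
        exact sub_eq_zero.mp (far (m := n) (by omega) hi.1)

lemma norm_sum_inner_commutator_le [CompleteSpace E] (e : HilbertBasis ℕ+ ℂ E) {C Z : E →L[ℂ] E}
    (htri : IsBlockTridiagonal e (fun n => n) C ∨ IsBlockTridiagonal e (fun n => n) Z)
    {n : ℕ} {ε : ℝ} (hε : 0 ≤ ε)
    (hC : ∀ i : ℕ+, psum (fun n => n) (n - 1) < i → ‖C (e i)‖ ≤ ε) :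
    ‖∑ j ∈ pnatIoc 0 (psum (fun n => n) n), ⟪e j, (C ∘L Z - Z ∘L C) (e j)⟫_ℂ‖
      ≤ 2 * ((n + 1) * (ε * ‖Z‖)) := by
  rw [sum_inner_commutator_eq_sum_blocks e (fun i => ⟨i, le_psum_id i⟩) htri n]
  have hCt : ∀ i ∈ pnatIoc (psum (fun n => n) n) (psum (fun n => n) (n + 1)), ‖C (e i)‖ ≤ ε :=
    fun i hi => hC i ((psum_mono _ (Nat.sub_le n 1)).trans_lt (mem_pnatIoc.mp hi).1)
  refine (e.orthonormal.norm_sum_sum_prodEntry_sub_le_of_norm_le Z hε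
    (fun i hi => hC i (mem_pnatIoc.mp hi).1) hCt).trans ?_
  rw [card_pnatIoc_psum_id, card_pnatIoc_psum_succ]
  gcongr
  rw [Real.sqrt_le_left (by positivity)]
  push_cast
  nlinarith

end

theorem diag_not_anderson_commutator_general
    (e : HilbertBasis ℕ+ ℂ H)
    (d : ℕ → ℝ)
    (hlimsup : ∃ c : ℝ, 0 < c ∧
      ∃ᶠ n in atTop, c ≤ (∑ j ∈ Finset.Icc 1 ((n * (n + 1) / 2 : ℕ)), d j) / (n : ℝ))
    (D : H →L[ℂ] H) (hD : ∀ i : ℕ+, D (e i) = (d (i : ℕ) : ℂ) • e i) :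
    ¬ ∃ C Z : H →L[ℂ] H, IsCompactOperator (⇑C) ∧
      (IsBlockTridiagonal e (fun n => n) C ∨ IsBlockTridiagonal e (fun n => n) Z) ∧
      D = C ∘L Z - Z ∘L C := by
  rintro ⟨C, Z, hC, htri, rfl⟩
  obtain ⟨c, hc, hfreq⟩ := hlimsup
  set ε := c / (4 * (‖Z‖ + 1))
  have hε : 0 < ε := by positivity
  obtain ⟨N, hN⟩ : ∃ N : ℕ+, ∀ i ≥ N, ‖C (e i)‖ ≤ ε := eventually_atTop.mp <| atTop_le_cofinite <|
    (e.tendsto_cofinite_of_isCompactOperator hC).norm.eventually (ge_mem_nhds (by simpa using hε))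
  obtain ⟨n, hcn, hNn⟩ := (hfreq.and_eventually (eventually_ge_atTop ((N : ℕ) + 1))).exists
  have hbound := norm_sum_inner_commutator_le e htri (n := n) hε.le fun i hi => hN i <| by
    have := le_psum_id (n - 1)
    exact_mod_cast (show (N : ℕ) ≤ i by omega)
  rw [sum_pnatIoc_inner_apply e.orthonormal hD, psum_id, Complex.norm_real,
    Real.norm_eq_abs] at hbound
  have hn : (1 : ℝ) ≤ n := by exact_mod_cast N.pos.trans_le (Nat.le_of_succ_le hNn)
  have hεZ : ε * ‖Z‖ < c / 4 := calc
    ε * ‖Z‖ < ε * (‖Z‖ + 1) := by gcongr; linarith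
    _ = c / 4 := by rw [div_mul_eq_mul_div, mul_div_mul_right _ _ (by positivity)]
  rw [le_div_iff₀ (by linarith)] at hcn
  have : c * n < c * n := calc
    c * n ≤ ∑ j ∈ Finset.Icc 1 (n * (n + 1) / 2), d j := hcn
    _ ≤ 2 * ((n + 1) * (ε * ‖Z‖)) := (le_abs_self _).trans hbound
    _ < 2 * ((n + 1) * (c / 4)) := by gcongr
    _ ≤ c * n := by nlinarith
  exact lt_irrefl _ this

/-- Let `(d i)_{i ≥ 1}` be a bounded strictly positive sequence with
`limsup (1/n) * (d 1 + ⋯ + d (n(n+1)/2)) > 0`, and let `D = diag d`. Then `D` cannot be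
obtained via the Anderson model: it is not the commutator of a compact operator `C` and a
bounded operator `Z` with at least one of them block tridiagonal with central block sizes
`k n = n`. -/
theorem diag_not_anderson_commutator
    (e : HilbertBasis ℕ+ ℂ H)
    (d : ℕ → ℝ) (hdpos : ∀ i, 1 ≤ i → 0 < d i) (hdbd : ∃ M : ℝ, ∀ i, 1 ≤ i → d i ≤ M)
    (hlimsup : ∃ c : ℝ, 0 < c ∧
      ∃ᶠ n in atTop, c ≤ (∑ j ∈ Finset.Icc 1 ((n * (n + 1) / 2 : ℕ)), d j) / (n : ℝ))
    (D : H →L[ℂ] H) (hD : ∀ i : ℕ+, D (e i) = (d (i : ℕ) : ℂ) • e i) :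
    ¬ ∃ C Z : H →L[ℂ] H, IsCompactOperator (⇑C) ∧
      (IsBlockTridiagonal e (fun n => n) C ∨ IsBlockTridiagonal e (fun n => n) Z) ∧
      D = C ∘L Z - Z ∘L C :=
  diag_not_anderson_commutator_general e d hlimsup D hD
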